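/- Csiszár sum identity: for random variables M and sequences Y₁ⁿ, Y₂ⁿ on finite alphabets, ∑_{i=1}^n I(Y_{2,i+1}^n; Y_{1,i} | M, Y₁^{i−1}) = ∑_{i=1}^n I(Y₁^{i−1}; Y_{2,i} | M, Y_{2,i+1}^n). -/

import Mathlib

open Finset

/-- The distribution of a random variable `Z` on a finite probability space
with probability mass function `p`. -/
noncomputable def distOf {Ω α : Type*} [Fintype Ω] [DecidableEq α]
    (p : Ω → ℝ) (Z : Ω → α) (z : α) : ℝ :=
  ∑ ω, if Z ω = z then p ω else 0

/-- Shannon entropy (in nats) of a random variable `Z` on a finite probability space. -/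
noncomputable def entOf {Ω α : Type*} [Fintype Ω] [Fintype α] [DecidableEq α]
    (p : Ω → ℝ) (Z : Ω → α) : ℝ :=
  -∑ z, distOf p Z z * Real.log (distOf p Z z)

/-- Conditional mutual information `I(A;B|C) = H(A,C) + H(B,C) − H(A,B,C) − H(C)`. -/
noncomputable def cmiOf {Ω α β γ : Type*} [Fintype Ω] [Fintype α] [DecidableEq α]
    [Fintype β] [DecidableEq β] [Fintype γ] [DecidableEq γ]
    (p : Ω → ℝ) (A : Ω → α) (B : Ω → β) (C : Ω → γ) : ℝ :=
  entOf p (fun ω => (A ω, C ω)) + entOf p (fun ω => (B ω, C ω))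
    - entOf p (fun ω => (A ω, B ω, C ω)) - entOf p C

/-- The prefix `y^i = (y_1, …, y_i)` of a length-`n` sequence (empty when `i = 0`). -/
def prefixSeq {α : Type*} (n : ℕ) (y : Fin n → α) (i : ℕ) : Fin (min i n) → α :=
  fun j => y ⟨j.val, by have := j.isLt; omega⟩

/-- The suffix `y_{i+1}^n = (y_{i+1}, …, y_n)` of a length-`n` sequence, i.e. the
sequence obtained by dropping the first `i` entries. -/
def suffixSeq {α : Type*} (n : ℕ) (y : Fin n → α) (i : ℕ) : Fin (n - i) → α :=
  fun j => y ⟨i + j.val, by have := j.isLt; omega⟩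

/-!
Write `J a b = H(M, Y₁^a, Y_{2,b+1}^n)`. Expanding each conditional mutual information into
four joint entropies, and using that `(Y₁^{i-1}, Y_{1,i})` carries the same information as `Y₁^i`
and `(Y_{2,i}, Y_{2,i+1}^n)` the same as `Y_{2,i}^n`, the `i`-th term on the left is
`J(i-1,i) + J(i,n) - J(i,i) - J(i-1,n)` and the `i`-th term on the right is
`J(i-1,i) + J(0,i-1) - J(i-1,i-1) - J(0,i)`. Apart from the common `J(i-1,i)`, both sums
telescope to `-J(0,n) - ∑_{0<i<n} J(i,i)`.
-/

section Entropy

variable {Ω α β : Type*} [Fintype Ω] [DecidableEq α] [DecidableEq β]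

lemma entOf_eq_neg_sum_image [Fintype α] (p : Ω → ℝ) (Z : Ω → α) :
    entOf p Z = -∑ z ∈ univ.image Z, distOf p Z z * Real.log (distOf p Z z) := by
  rw [entOf, ← sum_subset (subset_univ (univ.image Z))]
  intro z _ hz
  have hzero : distOf p Z z = 0 :=
    sum_eq_zero fun ω _ => if_neg fun h : Z ω = z => hz (h ▸ mem_image_of_mem Z (mem_univ ω))
  simp [hzero]

lemma distOf_comp_of_injOn (p : Ω → ℝ) {Z : Ω → α} {f : α → β}
    (hf : Set.InjOn f (Set.range Z)) (ω₀ : Ω) :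
    distOf p (f ∘ Z) (f (Z ω₀)) = distOf p Z (Z ω₀) :=
  sum_congr rfl fun ω _ =>
    if_congr ⟨fun h => hf ⟨ω, rfl⟩ ⟨ω₀, rfl⟩ h, congrArg f⟩ rfl rfl

lemma entOf_comp_of_injOn [Fintype α] [Fintype β] (p : Ω → ℝ) {Z : Ω → α} {f : α → β}
    (hf : Set.InjOn f (Set.range Z)) : entOf p (f ∘ Z) = entOf p Z := by
  rw [entOf_eq_neg_sum_image, entOf_eq_neg_sum_image, ← image_image, sum_image]
  · refine congrArg Neg.neg (sum_congr rfl fun z hz => ?_)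
    obtain ⟨ω, -, rfl⟩ := mem_image.1 hz
    rw [distOf_comp_of_injOn p hf]
  · simpa using hf

lemma entOf_eq_of_mutually_determined [Fintype α] [Fintype β] (p : Ω → ℝ) {Z : Ω → α} {W : Ω → β}
    (f : α → β) (g : β → α) (hf : ∀ ω, W ω = f (Z ω)) (hg : ∀ ω, Z ω = g (W ω)) :
    entOf p Z = entOf p W := by
  rw [show W = f ∘ Z from funext hf, entOf_comp_of_injOn]
  rintro _ ⟨a, rfl⟩ _ ⟨b, rfl⟩ hab
  rw [hg a, hg b, hf a, hf b, hab]

end Entropy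

section Sequences

variable {α : Type*} {n : ℕ}

instance isEmpty_fin_sub_self (n : ℕ) : IsEmpty (Fin (n - n)) := by
  rw [Nat.sub_self]; infer_instance

instance isEmpty_fin_zero_min (n : ℕ) : IsEmpty (Fin (min 0 n)) := by
  rw [Nat.zero_min]; infer_instance

def prefixSnoc {k : ℕ} (x : Fin (min k n) → α) (a : α) : Fin (min (k + 1) n) → α :=
  fun j => if h : j.val < min k n then x ⟨j, h⟩ else a

def suffixCons {k : ℕ} (a : α) (x : Fin (n - (k + 1)) → α) : Fin (n - k) → α :=
  fun j => if h : j.val = 0 then a else x ⟨j - 1, by omega⟩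

lemma prefixSeq_succ (y : Fin n → α) (k : Fin n) :
    prefixSeq n y (k + 1) = prefixSnoc (prefixSeq n y k) (y k) := by
  funext j
  have := j.isLt
  unfold prefixSnoc prefixSeq
  split_ifs with h
  · rfl
  · exact congrArg y (Fin.ext (by dsimp only; omega))

lemma suffixSeq_eq_suffixCons (y : Fin n → α) (k : Fin n) :
    suffixSeq n y k = suffixCons (y k) (suffixSeq n y (k + 1)) := by
  funext j
  unfold suffixCons suffixSeq
  split_ifs with h
  · exact congrArg y (Fin.ext (by dsimp only; omega))
  · exact congrArg y (Fin.ext (by dsimp only; omega))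

lemma suffixSeq_succ (y : Fin n → α) (k : ℕ) :
    suffixSeq n y (k + 1) = fun j : Fin (n - (k + 1)) => suffixSeq n y k ⟨j + 1, by omega⟩ :=
  funext fun j => congrArg y (Fin.ext (by dsimp only; omega))

end Sequences

lemma sum_fin_csiszar_telescope (F : ℕ → ℕ → ℝ) (n : ℕ) :
    ∑ k : Fin n, (F k (k + 1) + F (k + 1) n - F (k + 1) (k + 1) - F k n)
      = ∑ k : Fin n, (F k (k + 1) + F 0 k - F k k - F 0 (k + 1)) := by
  rw [Fin.sum_univ_eq_sum_range (fun k => F k (k + 1) + F (k + 1) n - F (k + 1) (k + 1) - F k n),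
    Fin.sum_univ_eq_sum_range (fun k => F k (k + 1) + F 0 k - F k k - F 0 (k + 1))]
  have hrow := sum_range_sub (fun k => F k n) n
  have hdiag := sum_range_sub (fun k => F k k) n
  have hcol := sum_range_sub (fun k => F 0 k) n
  simp only [sum_add_distrib, sum_sub_distrib] at hrow hdiag hcol ⊢
  linear_combination hrow - hdiag + hcol

section Csiszar

variable {Ω 𝓜 α β : Type*} [Fintype Ω] [Fintype 𝓜] [DecidableEq 𝓜]
  [Fintype α] [DecidableEq α] [Fintype β] [DecidableEq β]
  {n : ℕ} (p : Ω → ℝ) (M : Ω → 𝓜) (Y1 : Ω → Fin n → α) (Y2 : Ω → Fin n → β)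

noncomputable def jointEnt (a b : ℕ) : ℝ :=
  entOf p fun ω => (M ω, prefixSeq n (Y1 ω) a, suffixSeq n (Y2 ω) b)

lemma cmiOf_suffix_current_prefix (k : Fin n) :
    cmiOf p (fun ω => suffixSeq n (Y2 ω) (k + 1)) (fun ω => Y1 ω k)
        (fun ω => (M ω, prefixSeq n (Y1 ω) k))
      = jointEnt p M Y1 Y2 k (k + 1) + jointEnt p M Y1 Y2 (k + 1) n
        - jointEnt p M Y1 Y2 (k + 1) (k + 1) - jointEnt p M Y1 Y2 k n := by
  have hk := k.isLt
  have hAC : entOf p (fun ω => (suffixSeq n (Y2 ω) (k + 1), M ω, prefixSeq n (Y1 ω) k))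
      = jointEnt p M Y1 Y2 k (k + 1) :=
    entOf_eq_of_mutually_determined p (fun x => (x.2.1, x.2.2, x.1))
      (fun y => (y.2.2, y.1, y.2.1)) (fun _ => rfl) (fun _ => rfl)
  have hBC : entOf p (fun ω => (Y1 ω k, M ω, prefixSeq n (Y1 ω) k))
      = jointEnt p M Y1 Y2 (k + 1) n :=
    entOf_eq_of_mutually_determined p (fun x => (x.2.1, prefixSnoc x.2.2 x.1, default))
      (fun y => (y.2.1 ⟨k, by omega⟩, y.1, fun j => y.2.1 (Fin.castLE (by omega) j)))
      (fun _ => Prod.ext rfl (Prod.ext (prefixSeq_succ _ k) (Subsingleton.elim _ _)))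
      (fun _ => rfl)
  have hABC : entOf p (fun ω => (suffixSeq n (Y2 ω) (k + 1), Y1 ω k, M ω, prefixSeq n (Y1 ω) k))
      = jointEnt p M Y1 Y2 (k + 1) (k + 1) :=
    entOf_eq_of_mutually_determined p (fun x => (x.2.2.1, prefixSnoc x.2.2.2 x.2.1, x.1))
      (fun y => (y.2.2, y.2.1 ⟨k, by omega⟩, y.1, fun j => y.2.1 (Fin.castLE (by omega) j)))
      (fun _ => Prod.ext rfl (Prod.ext (prefixSeq_succ _ k) rfl))
      (fun _ => rfl)
  have hC : entOf p (fun ω => (M ω, prefixSeq n (Y1 ω) k)) = jointEnt p M Y1 Y2 k n :=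
    entOf_eq_of_mutually_determined p (fun x => (x.1, x.2, default)) (fun y => (y.1, y.2.1))
      (fun _ => Prod.ext rfl (Prod.ext rfl (Subsingleton.elim _ _))) (fun _ => rfl)
  rw [cmiOf, hAC, hBC, hABC, hC]

lemma cmiOf_prefix_current_suffix (k : Fin n) :
    cmiOf p (fun ω => prefixSeq n (Y1 ω) k) (fun ω => Y2 ω k)
        (fun ω => (M ω, suffixSeq n (Y2 ω) (k + 1)))
      = jointEnt p M Y1 Y2 k (k + 1) + jointEnt p M Y1 Y2 0 k
        - jointEnt p M Y1 Y2 k k - jointEnt p M Y1 Y2 0 (k + 1) := by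
  have hk := k.isLt
  have hAC : entOf p (fun ω => (prefixSeq n (Y1 ω) k, M ω, suffixSeq n (Y2 ω) (k + 1)))
      = jointEnt p M Y1 Y2 k (k + 1) :=
    entOf_eq_of_mutually_determined p (fun x => (x.2.1, x.1, x.2.2))
      (fun y => (y.2.1, y.1, y.2.2)) (fun _ => rfl) (fun _ => rfl)
  have hBC : entOf p (fun ω => (Y2 ω k, M ω, suffixSeq n (Y2 ω) (k + 1)))
      = jointEnt p M Y1 Y2 0 k :=
    entOf_eq_of_mutually_determined p (fun x => (x.2.1, default, suffixCons x.1 x.2.2))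
      (fun y => (y.2.2 ⟨0, by omega⟩, y.1, fun j => y.2.2 ⟨j + 1, by omega⟩))
      (fun _ => Prod.ext rfl (Prod.ext (Subsingleton.elim _ _) (suffixSeq_eq_suffixCons _ k)))
      (fun _ => Prod.ext rfl (Prod.ext rfl (suffixSeq_succ _ k)))
  have hABC : entOf p (fun ω => (prefixSeq n (Y1 ω) k, Y2 ω k, M ω, suffixSeq n (Y2 ω) (k + 1)))
      = jointEnt p M Y1 Y2 k k :=
    entOf_eq_of_mutually_determined p (fun x => (x.2.2.1, x.1, suffixCons x.2.1 x.2.2.2))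
      (fun y => (y.2.1, y.2.2 ⟨0, by omega⟩, y.1, fun j => y.2.2 ⟨j + 1, by omega⟩))
      (fun _ => Prod.ext rfl (Prod.ext rfl (suffixSeq_eq_suffixCons _ k)))
      (fun _ => Prod.ext rfl (Prod.ext rfl (Prod.ext rfl (suffixSeq_succ _ k))))
  have hC : entOf p (fun ω => (M ω, suffixSeq n (Y2 ω) (k + 1)))
      = jointEnt p M Y1 Y2 0 (k + 1) :=
    entOf_eq_of_mutually_determined p (fun x => (x.1, default, x.2)) (fun y => (y.1, y.2.2))
      (fun _ => Prod.ext rfl (Prod.ext (Subsingleton.elim _ _) rfl)) (fun _ => rfl)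
  rw [cmiOf, hAC, hBC, hABC, hC]

end Csiszar

/-- The 1-based index `i` of the paper is `i : Fin n` here: `Y₁^{i−1}` is the prefix of length
`i.val` and `Y_{2,i+1}^n` drops the first `i.val + 1` entries. -/
theorem csiszar_sum_identity_general
    {Ω 𝓜 α β : Type*} [Fintype Ω] [Fintype 𝓜] [DecidableEq 𝓜]
    [Fintype α] [DecidableEq α] [Fintype β] [DecidableEq β]
    (n : ℕ) (p : Ω → ℝ)
    (M : Ω → 𝓜) (Y1 : Ω → Fin n → α) (Y2 : Ω → Fin n → β) :
    ∑ i : Fin n,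
        cmiOf p (fun ω => suffixSeq n (Y2 ω) (i.val + 1)) (fun ω => Y1 ω i)
          (fun ω => (M ω, prefixSeq n (Y1 ω) i.val))
      = ∑ i : Fin n,
          cmiOf p (fun ω => prefixSeq n (Y1 ω) i.val) (fun ω => Y2 ω i)
            (fun ω => (M ω, suffixSeq n (Y2 ω) (i.val + 1))) := by
  simp only [cmiOf_suffix_current_prefix, cmiOf_prefix_current_suffix]
  exact sum_fin_csiszar_telescope (jointEnt p M Y1 Y2) n

/-- Csiszár sum identity:
`∑_{i=1}^n I(Y_{2,i+1}^n; Y_{1,i} | M, Y₁^{i−1}) = ∑_{i=1}^n I(Y₁^{i−1}; Y_{2,i} | M, Y_{2,i+1}^n)`.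
Here the 1-based index `i` corresponds to `i : Fin n` (0-based), so `Y₁^{i−1}` is the
prefix of length `i.val` and `Y_{2,i+1}^n` drops the first `i.val + 1` entries. -/
theorem csiszar_sum_identity
    {Ω 𝓜 α β : Type*} [Fintype Ω] [Fintype 𝓜] [DecidableEq 𝓜]
    [Fintype α] [DecidableEq α] [Fintype β] [DecidableEq β]
    (n : ℕ) (p : Ω → ℝ) (hp0 : ∀ ω, 0 ≤ p ω) (hp1 : ∑ ω, p ω = 1)
    (M : Ω → 𝓜) (Y1 : Ω → Fin n → α) (Y2 : Ω → Fin n → β) :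
    ∑ i : Fin n,
        cmiOf p (fun ω => suffixSeq n (Y2 ω) (i.val + 1)) (fun ω => Y1 ω i)
          (fun ω => (M ω, prefixSeq n (Y1 ω) i.val))
      = ∑ i : Fin n,
          cmiOf p (fun ω => prefixSeq n (Y1 ω) i.val) (fun ω => Y2 ω i)
            (fun ω => (M ω, suffixSeq n (Y2 ω) (i.val + 1))) :=
  csiszar_sum_identity_general n p M Y1 Y2
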